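/- For 1 < α < 2 and the weighted coefficients φ_m^α defined by φ_0^α = (α/2)g_0^α, φ_m^α = (α/2)g_m^α + ((2-α)/2)g_{m-1}^α (m ≥ 1), one has φ_0^α = α/2 > 0, φ_1^α = (2 - α - α²)/2 < 0, φ_2^α = α(α² + α - 4)/4, and φ_m^α ≥ 0 for all m ≥ 3. -/

import Mathlib

/-- The Grünwald weight `g_m^α = (-1)^m * C(α, m)`. -/
noncomputable def grunwaldG (α : ℝ) (m : ℕ) : ℝ :=
  (-1) ^ m * (∏ i ∈ Finset.range m, (α - i)) / m.factorial

/-- The weighted Grünwald coefficient `φ_m^α`. -/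
noncomputable def weightedPhi (α : ℝ) : ℕ → ℝ
  | 0 => α / 2 * grunwaldG α 0
  | m + 1 => α / 2 * grunwaldG α (m + 1) + (2 - α) / 2 * grunwaldG α m

/-! From `g_0 = 1`, `g_1 = -α`, `g_2 = α(α-1)/2` the first three coefficients are direct
computations. The recurrence `g_{m+1} = g_m (m - α)/(m + 1)` has a nonnegative factor once
`m ≥ 2 > α`, so `g_m ≥ 0` for all `m ≥ 2`; for `m ≥ 3` the coefficient `φ_m` is then a
nonnegative combination of `g_m` and `g_{m-1}`. -/

section grunwaldG

variable (α : ℝ)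

@[simp]
lemma grunwaldG_zero : grunwaldG α 0 = 1 := by
  simp [grunwaldG]

@[simp]
lemma grunwaldG_one : grunwaldG α 1 = -α := by
  simp [grunwaldG]

@[simp]
lemma grunwaldG_two : grunwaldG α 2 = α * (α - 1) / 2 := by
  simp [grunwaldG, Finset.prod_range_succ]

lemma grunwaldG_succ (m : ℕ) :
    grunwaldG α (m + 1) = grunwaldG α m * (m - α) / (m + 1) := by
  simp only [grunwaldG, Finset.prod_range_succ, Nat.factorial_succ, pow_succ]
  push_cast
  field_simp
  ring

variable {α}

lemma grunwaldG_nonneg {m : ℕ} (hα : 1 ≤ α) (hα2 : α ≤ 2) (hm : 2 ≤ m) :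
    0 ≤ grunwaldG α m := by
  induction m, hm using Nat.le_induction with
  | base => rw [grunwaldG_two]; nlinarith
  | succ n hn ih =>
    have hn' : α ≤ n := hα2.trans (by exact_mod_cast hn)
    rw [grunwaldG_succ]
    exact div_nonneg (mul_nonneg ih (sub_nonneg.mpr hn')) (by positivity)

end grunwaldG

lemma weightedPhi_succ (α : ℝ) (m : ℕ) :
    weightedPhi α (m + 1) = α / 2 * grunwaldG α (m + 1) + (2 - α) / 2 * grunwaldG α m :=
  rfl

lemma weightedPhi_nonneg {α : ℝ} {m : ℕ} (hα : 1 ≤ α) (hα2 : α ≤ 2) (hm : 3 ≤ m) :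
    0 ≤ weightedPhi α m := by
  obtain ⟨k, rfl⟩ := Nat.exists_eq_add_of_le' (by omega : 1 ≤ m)
  rw [weightedPhi_succ]
  have hg : ∀ n, 2 ≤ n → 0 ≤ grunwaldG α n := fun n hn => grunwaldG_nonneg hα hα2 hn
  exact add_nonneg (mul_nonneg (by linarith) (hg _ (by omega)))
    (mul_nonneg (by linarith) (hg _ (by omega)))

theorem weightedPhi_signs (α : ℝ) (hα : 1 < α) (hα2 : α < 2) :
    weightedPhi α 0 = α / 2 ∧ 0 < weightedPhi α 0 ∧
    weightedPhi α 1 = (2 - α - α ^ 2) / 2 ∧ weightedPhi α 1 < 0 ∧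
    weightedPhi α 2 = α * (α ^ 2 + α - 4) / 4 ∧
    (∀ m : ℕ, 3 ≤ m → 0 ≤ weightedPhi α m) := by
  have phi0 : weightedPhi α 0 = α / 2 := by simp [weightedPhi]
  have phi1 : weightedPhi α 1 = (2 - α - α ^ 2) / 2 := by
    simp only [weightedPhi_succ, zero_add, grunwaldG_one, grunwaldG_zero]; ring
  have phi2 : weightedPhi α 2 = α * (α ^ 2 + α - 4) / 4 := by
    simp only [weightedPhi_succ, Nat.reduceAdd, grunwaldG_two, grunwaldG_one]; ring
  refine ⟨phi0, by rw [phi0]; linarith, phi1, by rw [phi1]; nlinarith, phi2, ?_⟩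
  exact fun m hm => weightedPhi_nonneg hα.le hα2.le hm
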